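/- arXiv:1010.3455 — 4 statements merged into one kernel-verified Lean document; each statement's English description precedes it below -/
import Mathlib

section
/- Let K be a field and M a finite J-trivial monoid. Let Q(M) be the set of non-idempotent elements x ∈ M admitting no non-trivial factorization, i.e., such that for every factorization x = u·v one has lfix(x)·u = lfix(x) or v·rfix(x) = rfix(x). Let R denote the Jacobson radical of MonoidAlgebra K M and R² the ideal product R·R. Then the images of the elements x − x^ω, for x ∈ Q(M), form a K-basis of the quotient R/R²; in particular dim_K(R/R²) equals the cardinality of Q(M). -/
/-- The `J`-preorder on a monoid: `x ≤_J y` iff `x = u * y * v` for some `u, v`. -/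
def leJ {M : Type*} [Monoid M] (x y : M) : Prop := ∃ u v : M, x = u * y * v

/-- A monoid is `J`-trivial if `M x M = M y M` implies `x = y`. -/
def JTrivial (M : Type*) [Monoid M] : Prop :=
  ∀ x y : M, {z : M | ∃ u v : M, z = u * x * v} = {z : M | ∃ u v : M, z = u * y * v} → x = y

open Classical

/-- `x ^ ω`: the unique idempotent among the positive powers of `x`
(in a finite `J`-trivial monoid it exists and is unique). -/
noncomputable def omegaPow {M : Type*} [Monoid M] (x : M) : M :=
  if h : ∃ e : M, IsIdempotentElem e ∧ ∃ n : ℕ, 0 < n ∧ e = x ^ n then h.choose else 1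

/-- `lfix x`: the `≤_J`-minimum of the idempotents `e` with `e * x = x`
(it exists in a finite `J`-trivial monoid). -/
noncomputable def lfixF {M : Type*} [Monoid M] (x : M) : M :=
  if h : ∃ e : M, (IsIdempotentElem e ∧ e * x = x) ∧
      ∀ f : M, IsIdempotentElem f → f * x = x → leJ e f
  then h.choose else 1

/-- `rfix x`: the `≤_J`-minimum of the idempotents `e` with `x * e = x`
(it exists in a finite `J`-trivial monoid). -/
noncomputable def rfixF {M : Type*} [Monoid M] (x : M) : M :=
  if h : ∃ e : M, (IsIdempotentElem e ∧ x * e = x) ∧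
      ∀ f : M, IsIdempotentElem f → x * f = x → leJ e f
  then h.choose else 1

/-- `Q(M)`: the set of non-idempotent elements admitting no non-trivial factorization. -/
def quiverSet (M : Type*) [Monoid M] : Set M :=
  {x : M | ¬ IsIdempotentElem x ∧ ∀ u v : M, x = u * v →
    lfixF x * u = lfixF x ∨ v * rfixF x = rfixF x}

/-!
In a finite `J`-trivial monoid `z * a ^ n = z` iff `z * a = z`, so `x ^ ω` depends only on the
right stabiliser of `x`; hence `(a * b ^ ω) ^ ω = (a ^ ω * b) ^ ω = (a * b) ^ ω`. It follows
that `N = span {x - x ^ ω}` is a left ideal, and it is nil because multiplication by `x - x ^ ω`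
strictly lowers the `J`-height of basis elements; so `N ⊆ R`. Conversely the characters
`χ_e(x) = [e * x = e]`, `e` idempotent, vanish on the radical and on `N`, and are unitriangular
on the idempotents, which span `K[M]` modulo `N`; so `R = N`.

Modulo `R²`, the identity `(u - u ^ ω)(v - v ^ ω) ≡ 0` writes `x - x ^ ω` for a non-trivial
factorization `x = u * v` through elements strictly `J`-below `x`, so the classes of
`x - x ^ ω`, `x ∈ Q(M)`, span `R/R²`. They are independent because the functional `ψ_q`
summing the coefficients over `{y | lfix q * y * rfix q = q}` kills `R²` for `q ∈ Q(M)` and is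
unitriangular against the `x - x ^ ω`.
-/

section Monoid

variable {M : Type*} [Monoid M]

theorem leJ_refl (x : M) : leJ x x := ⟨1, 1, by simp⟩

theorem leJ_trans {x y z : M} : leJ x y → leJ y z → leJ x z := by
  rintro ⟨u, v, rfl⟩ ⟨s, t, rfl⟩
  exact ⟨u * s, t * v, by simp only [mul_assoc]⟩

theorem leJ_mul_left (a x : M) : leJ (a * x) x := ⟨a, 1, by simp⟩

theorem leJ_mul_right (x a : M) : leJ (x * a) x := ⟨1, a, by simp⟩

theorem JTrivial.antisymm (hJ : JTrivial M) {x y : M} (hxy : leJ x y) (hyx : leJ y x) : x = y := by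
  refine hJ x y (Set.ext fun z => ⟨?_, ?_⟩) <;> rintro ⟨u, v, rfl⟩
  · exact leJ_trans ⟨u, v, rfl⟩ hxy
  · exact leJ_trans ⟨u, v, rfl⟩ hyx

namespace JTrivial

variable (hJ : JTrivial M)
include hJ

theorem mul_eq_self_of_leJ {x a : M} (h : leJ x (x * a)) : x * a = x :=
  hJ.antisymm (leJ_mul_right x a) h

theorem mul_eq_self_of_leJ' {x a : M} (h : leJ x (a * x)) : a * x = x :=
  hJ.antisymm (leJ_mul_left a x) h

theorem mul_mul_eq_self_iff {z a b : M} : z * (a * b) = z ↔ z * a = z ∧ z * b = z := by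
  refine ⟨fun h => ?_, fun ⟨ha, hb⟩ => by rw [← mul_assoc, ha, hb]⟩
  have ha : z * a = z := hJ.mul_eq_self_of_leJ ⟨1, b, by rw [one_mul, mul_assoc, h]⟩
  exact ⟨ha, by rwa [← mul_assoc, ha] at h⟩

theorem mul_mul_eq_self_iff' {z a b : M} : a * b * z = z ↔ a * z = z ∧ b * z = z := by
  refine ⟨fun h => ?_, fun ⟨ha, hb⟩ => by rw [mul_assoc, hb, ha]⟩
  have hb : b * z = z := hJ.mul_eq_self_of_leJ' ⟨a, 1, by rw [mul_one, ← mul_assoc, h]⟩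
  exact ⟨by rwa [mul_assoc, hb] at h, hb⟩

theorem mul_pow_eq_self_iff {z a : M} {n : ℕ} (hn : n ≠ 0) : z * a ^ n = z ↔ z * a = z := by
  obtain ⟨n, rfl⟩ := Nat.exists_eq_succ_of_ne_zero hn
  induction n with
  | zero => rw [pow_one]
  | succ n ih => rw [pow_succ, hJ.mul_mul_eq_self_iff, ih n.succ_ne_zero, and_self]

theorem pow_mul_eq_self_iff {z a : M} {n : ℕ} (hn : n ≠ 0) : a ^ n * z = z ↔ a * z = z := by
  obtain ⟨n, rfl⟩ := Nat.exists_eq_succ_of_ne_zero hn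
  induction n with
  | zero => rw [pow_one]
  | succ n ih => rw [pow_succ', hJ.mul_mul_eq_self_iff', ih n.succ_ne_zero, and_self]

end JTrivial

section Omega

variable [Finite M] (hJ : JTrivial M)
include hJ

namespace JTrivial

theorem exists_isIdempotentElem_pow (x : M) :
    ∃ e : M, IsIdempotentElem e ∧ ∃ n : ℕ, 0 < n ∧ e = x ^ n := by
  obtain ⟨i, j, hij, hpow⟩ := Finite.exists_ne_map_eq_of_infinite (fun n : ℕ => x ^ (n + 1))
  wlog hlt : i < j generalizing i j
  · exact this j i hij.symm hpow.symm (by omega)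
  have hfix : x ^ (i + 1) * x ^ (j - i) = x ^ (i + 1) := by
    rw [← pow_add, hpow, show i + 1 + (j - i) = j + 1 by omega]
  rw [hJ.mul_pow_eq_self_iff (by omega), ← hJ.mul_pow_eq_self_iff (Nat.succ_ne_zero i)] at hfix
  exact ⟨x ^ (i + 1), hfix, i + 1, i.succ_pos, rfl⟩

theorem omegaPow_spec (x : M) :
    IsIdempotentElem (omegaPow x) ∧ ∃ n : ℕ, 0 < n ∧ omegaPow x = x ^ n := by
  rw [omegaPow, dif_pos (hJ.exists_isIdempotentElem_pow x)]
  exact (hJ.exists_isIdempotentElem_pow x).choose_spec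

theorem isIdempotentElem_omegaPow (x : M) : IsIdempotentElem (omegaPow x) :=
  (hJ.omegaPow_spec x).1

theorem omegaPow_eq_self {e : M} (he : IsIdempotentElem e) : omegaPow e = e := by
  obtain ⟨n, hn, h⟩ := (hJ.omegaPow_spec e).2
  rw [h, he.pow_eq hn.ne']

theorem mul_omegaPow_eq_self_iff {z x : M} : z * omegaPow x = z ↔ z * x = z := by
  obtain ⟨n, hn, h⟩ := (hJ.omegaPow_spec x).2
  rw [h, hJ.mul_pow_eq_self_iff hn.ne']

theorem omegaPow_mul_eq_self_iff {z x : M} : omegaPow x * z = z ↔ x * z = z := by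
  obtain ⟨n, hn, h⟩ := (hJ.omegaPow_spec x).2
  rw [h, hJ.pow_mul_eq_self_iff hn.ne']

theorem omegaPow_mul_self (x : M) : omegaPow x * x = omegaPow x :=
  hJ.mul_omegaPow_eq_self_iff.1 (hJ.isIdempotentElem_omegaPow x)

theorem mul_omegaPow_self (x : M) : x * omegaPow x = omegaPow x :=
  hJ.omegaPow_mul_eq_self_iff.1 (hJ.isIdempotentElem_omegaPow x)

theorem leJ_omegaPow (x : M) : leJ (omegaPow x) x := by
  nth_rw 1 [← hJ.omegaPow_mul_self x]
  exact leJ_mul_left _ _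

theorem omegaPow_congr {x y : M} (h : ∀ z, z * x = z ↔ z * y = z) :
    omegaPow x = omegaPow y := by
  have key : ∀ {x y : M}, (∀ z, z * x = z ↔ z * y = z) →
      omegaPow x * omegaPow y = omegaPow x :=
    fun h => hJ.mul_omegaPow_eq_self_iff.2 ((h _).1 (hJ.omegaPow_mul_self _))
  exact hJ.antisymm ⟨omegaPow x, 1, by rw [mul_one, key h]⟩
    ⟨omegaPow y, 1, by rw [mul_one, key fun z => (h z).symm]⟩

theorem omegaPow_mul_omegaPow (a b : M) : omegaPow (a * omegaPow b) = omegaPow (a * b) :=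
  hJ.omegaPow_congr fun _ => by
    rw [hJ.mul_mul_eq_self_iff, hJ.mul_mul_eq_self_iff, hJ.mul_omegaPow_eq_self_iff]

theorem omegaPow_omegaPow_mul (a b : M) : omegaPow (omegaPow a * b) = omegaPow (a * b) :=
  hJ.omegaPow_congr fun _ => by
    rw [hJ.mul_mul_eq_self_iff, hJ.mul_mul_eq_self_iff, hJ.mul_omegaPow_eq_self_iff]

end JTrivial

end Omega

section Height

variable [Finite M]

noncomputable def jHeight (x : M) : ℕ := {z | leJ z x}.ncard

theorem jHeight_le_jHeight {x y : M} (h : leJ x y) : jHeight x ≤ jHeight y :=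
  Set.ncard_le_ncard (fun _ hz => leJ_trans hz h) (Set.toFinite _)

variable (hJ : JTrivial M)
include hJ

namespace JTrivial

theorem jHeight_lt_jHeight {x y : M} (h : leJ x y) (hne : x ≠ y) :
    jHeight x < jHeight y :=
  Set.ncard_lt_ncard
    ⟨fun _ hz => leJ_trans hz h, fun hsub => hne (hJ.antisymm h (hsub (leJ_refl y)))⟩
    (Set.toFinite _)

theorem eq_of_leJ_of_jHeight_le {x y : M} (h : leJ x y) (hle : jHeight y ≤ jHeight x) :
    x = y := by
  by_contra hne
  exact absurd (hJ.jHeight_lt_jHeight h hne) (not_lt.2 hle)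

theorem exists_leJ_forall_of_omegaPow_mul_mem {S : Set M} (hne : S.Nonempty)
    (hS : ∀ e ∈ S, ∀ f ∈ S, omegaPow (e * f) ∈ S) :
    ∃ e ∈ S, ∀ f ∈ S, leJ e f := by
  obtain ⟨e, he, hmin⟩ := Set.exists_min_image S jHeight S.toFinite hne
  refine ⟨e, he, fun f hf => ?_⟩
  have hle : leJ (omegaPow (e * f)) (e * f) := hJ.leJ_omegaPow _
  rw [hJ.eq_of_leJ_of_jHeight_le (leJ_trans hle (leJ_mul_right e f)) (hmin _ (hS e he f hf))]
    at hle
  exact leJ_trans hle (leJ_mul_left e f)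

end JTrivial

end Height

section Fix

variable [Finite M] (hJ : JTrivial M)
include hJ

namespace JTrivial

theorem lfixF_spec (x : M) : (IsIdempotentElem (lfixF x) ∧ lfixF x * x = x) ∧
    ∀ f : M, IsIdempotentElem f → f * x = x → leJ (lfixF x) f := by
  have hex : ∃ e : M, (IsIdempotentElem e ∧ e * x = x) ∧
      ∀ f : M, IsIdempotentElem f → f * x = x → leJ e f := by
    obtain ⟨e, he, hmin⟩ := hJ.exists_leJ_forall_of_omegaPow_mul_mem
      (S := {e | IsIdempotentElem e ∧ e * x = x}) ⟨1, IsIdempotentElem.one, one_mul x⟩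
      fun e he f hf => ⟨hJ.isIdempotentElem_omegaPow _,
        hJ.omegaPow_mul_eq_self_iff.2 (by rw [mul_assoc, hf.2, he.2])⟩
    exact ⟨e, he, fun f hf hfx => hmin f ⟨hf, hfx⟩⟩
  rw [lfixF, dif_pos hex]
  exact hex.choose_spec

theorem rfixF_spec (x : M) : (IsIdempotentElem (rfixF x) ∧ x * rfixF x = x) ∧
    ∀ f : M, IsIdempotentElem f → x * f = x → leJ (rfixF x) f := by
  have hex : ∃ e : M, (IsIdempotentElem e ∧ x * e = x) ∧
      ∀ f : M, IsIdempotentElem f → x * f = x → leJ e f := by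
    obtain ⟨e, he, hmin⟩ := hJ.exists_leJ_forall_of_omegaPow_mul_mem
      (S := {e | IsIdempotentElem e ∧ x * e = x}) ⟨1, IsIdempotentElem.one, mul_one x⟩
      fun e he f hf => ⟨hJ.isIdempotentElem_omegaPow _,
        hJ.mul_omegaPow_eq_self_iff.2 (by rw [← mul_assoc, he.2, hf.2])⟩
    exact ⟨e, he, fun f hf hfx => hmin f ⟨hf, hfx⟩⟩
  rw [rfixF, dif_pos hex]
  exact hex.choose_spec

theorem isIdempotentElem_lfixF (x : M) : IsIdempotentElem (lfixF x) := (hJ.lfixF_spec x).1.1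

theorem lfixF_mul_self (x : M) : lfixF x * x = x := (hJ.lfixF_spec x).1.2

theorem isIdempotentElem_rfixF (x : M) : IsIdempotentElem (rfixF x) := (hJ.rfixF_spec x).1.1

theorem mul_rfixF_self (x : M) : x * rfixF x = x := (hJ.rfixF_spec x).1.2

theorem lfixF_mul_eq_self {x e : M} (h : e * x = x) : lfixF x * e = lfixF x := by
  have hmin : leJ (lfixF x) (omegaPow (lfixF x * e)) :=
    (hJ.lfixF_spec x).2 _ (hJ.isIdempotentElem_omegaPow _)
      (hJ.omegaPow_mul_eq_self_iff.2 (by rw [mul_assoc, h, hJ.lfixF_mul_self]))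
  exact hJ.mul_eq_self_of_leJ (leJ_trans hmin (hJ.leJ_omegaPow _))

theorem mul_rfixF_eq_self {x e : M} (h : x * e = x) : e * rfixF x = rfixF x := by
  have hmin : leJ (rfixF x) (omegaPow (e * rfixF x)) :=
    (hJ.rfixF_spec x).2 _ (hJ.isIdempotentElem_omegaPow _)
      (hJ.mul_omegaPow_eq_self_iff.2 (by rw [← mul_assoc, h, hJ.mul_rfixF_self]))
  exact hJ.mul_eq_self_of_leJ' (leJ_trans hmin (hJ.leJ_omegaPow _))

end JTrivial

end Fix

end Monoid

section Quiver

variable {M : Type*} [Monoid M] [Finite M] (hJ : JTrivial M)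
include hJ

namespace JTrivial

theorem lfixF_mul_mul_rfixF_ne {q c d : M} (hq : q ∈ quiverSet M)
    (hc : lfixF q * c ≠ lfixF q) (hd : d * rfixF q ≠ rfixF q) :
    lfixF q * (c * d) * rfixF q ≠ q := by
  intro h
  rcases hq.2 (lfixF q * c) (d * rfixF q) (h.symm.trans (by simp only [mul_assoc])) with h' | h'
  · rw [← mul_assoc, (hJ.isIdempotentElem_lfixF q).eq] at h'
    exact hc h'
  · rw [mul_assoc, (hJ.isIdempotentElem_rfixF q).eq] at h'
    exact hd h'

theorem lfixF_mul_eq_self_of_omegaPow_mul_eq {u y x : M} (h : omegaPow u * y = x) :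
    lfixF x * u = lfixF x :=
  hJ.mul_omegaPow_eq_self_iff.1 <| hJ.lfixF_mul_eq_self <| by
    rw [← h, ← mul_assoc, (hJ.isIdempotentElem_omegaPow u).eq]

theorem mul_rfixF_eq_self_of_mul_omegaPow_eq {y v x : M} (h : y * omegaPow v = x) :
    v * rfixF x = rfixF x :=
  hJ.omegaPow_mul_eq_self_iff.1 <| hJ.mul_rfixF_eq_self <| by
    rw [← h, mul_assoc, (hJ.isIdempotentElem_omegaPow v).eq]

theorem exists_mul_eq_jHeight_lt {x : M} (hx : ¬IsIdempotentElem x) (hxq : x ∉ quiverSet M) :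
    ∃ u v : M, x = u * v ∧ jHeight (u * omegaPow v) < jHeight x ∧
      jHeight (omegaPow u * v) < jHeight x ∧ jHeight (omegaPow u * omegaPow v) < jHeight x := by
  obtain ⟨u, v, rfl, hu, hv⟩ :
      ∃ u v, x = u * v ∧ lfixF x * u ≠ lfixF x ∧ v * rfixF x ≠ rfixF x := by
    simpa [quiverSet, hx] using hxq
  refine ⟨u, v, rfl,
    hJ.jHeight_lt_jHeight ?_ fun h => hv (hJ.mul_rfixF_eq_self_of_mul_omegaPow_eq h),
    hJ.jHeight_lt_jHeight ?_ fun h => hu (hJ.lfixF_mul_eq_self_of_omegaPow_mul_eq h),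
    hJ.jHeight_lt_jHeight ?_ fun h => hu (hJ.lfixF_mul_eq_self_of_omegaPow_mul_eq h)⟩
  · rw [← hJ.mul_omegaPow_self v, ← mul_assoc]
    exact leJ_mul_right _ _
  · rw [← hJ.omegaPow_mul_self u, mul_assoc]
    exact leJ_mul_left _ _
  · refine ⟨omegaPow u, omegaPow v, ?_⟩
    simp only [mul_assoc]
    rw [hJ.mul_omegaPow_self v, ← mul_assoc, hJ.omegaPow_mul_self]

end JTrivial

end Quiver

theorem coeff_eq_zero_of_triangular {ι R V : Type*} [CommSemiring R] [NoZeroDivisors R]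
    [AddCommMonoid V] [Module R V] {s : Finset ι} {c : ι → R} (v : ι → V)
    (φ : ι → V →ₗ[R] R) (h : ι → ℕ) (hdiag : ∀ i ∈ s, φ i (v i) ≠ 0)
    (htri : ∀ i ∈ s, ∀ j ∈ s, h j ≤ h i → j ≠ i → φ i (v j) = 0)
    (hsum : ∀ i ∈ s, φ i (∑ j ∈ s, c j • v j) = 0) : ∀ i ∈ s, c i = 0 := by
  by_contra! hne
  obtain ⟨i, hi, hmax⟩ := (s.filter (c · ≠ 0)).exists_max_image h
    (by simpa [Finset.filter_nonempty_iff] using hne)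
  rw [Finset.mem_filter] at hi
  have hφ : φ i (∑ j ∈ s, c j • v j) = c i * φ i (v i) := by
    rw [map_sum, Finset.sum_eq_single_of_mem i hi.1 fun j hj hji => ?_, map_smul, smul_eq_mul]
    by_cases hcj : c j = 0
    · rw [hcj, zero_smul, map_zero]
    · rw [map_smul, htri i hi.1 j hj (hmax j (Finset.mem_filter.2 ⟨hj, hcj⟩)) hji, smul_zero]
  rw [hsum i hi.1] at hφ
  exact mul_ne_zero hi.2 (hdiag i hi.1) hφ.symm

theorem Ideal.mem_jacobson_bot_of_forall_isNilpotent_mul {R : Type*} [Ring R] {x : R}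
    (h : ∀ y, IsNilpotent (y * x)) : x ∈ Ideal.jacobson (⊥ : Ideal R) := by
  refine Ideal.mem_jacobson_iff.2 fun y => ?_
  obtain ⟨u, hu⟩ := (h y).isUnit_add_one
  refine ⟨↑u⁻¹, ?_⟩
  rw [mul_assoc, ← mul_add_one, ← hu, Units.inv_mul, sub_self]
  exact zero_mem _

section MonoidAlgebra

open MonoidAlgebra Submodule

variable (K : Type*) {M : Type*} [Monoid M]

section CommRing

variable [CommRing K]

noncomputable def omegaDiff (x : M) : MonoidAlgebra K M := of K M x - of K M (omegaPow x)

variable (M) in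
noncomputable def omegaDiffSpan : Submodule K (MonoidAlgebra K M) :=
  span K (Set.range (omegaDiff K (M := M)))

theorem omegaDiff_mem_omegaDiffSpan (x : M) : omegaDiff K x ∈ omegaDiffSpan K M :=
  subset_span ⟨x, rfl⟩

theorem omegaDiff_mul_omegaDiff (a b : M) :
    omegaDiff K a * omegaDiff K b = of K M (a * b) - of K M (a * omegaPow b)
      - of K M (omegaPow a * b) + of K M (omegaPow a * omegaPow b) := by
  simp only [omegaDiff, sub_mul, mul_sub, ← map_mul]
  abel

variable (hJ : JTrivial M)
include hJ

namespace JTrivial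

noncomputable def fixChar (e : M) : MonoidAlgebra K M →ₐ[K] K :=
  MonoidAlgebra.lift K K M
    { toFun := fun x => if e * x = e then 1 else 0
      map_one' := by simp
      map_mul' := fun x y => by
        by_cases hx : e * x = e <;> by_cases hy : e * y = e <;>
          simp [hJ.mul_mul_eq_self_iff, hx, hy] }

theorem fixChar_of (e x : M) :
    hJ.fixChar K e (of K M x) = if e * x = e then 1 else 0 := by
  rw [fixChar, lift_of]
  rfl

end JTrivial

variable [Finite M]

namespace JTrivial

theorem omegaDiff_mul_eq (a b : M) :
    omegaDiff K (a * b) = omegaDiff K a * omegaDiff K b + omegaDiff K (a * omegaPow b)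
      + omegaDiff K (omegaPow a * b) - omegaDiff K (omegaPow a * omegaPow b) := by
  rw [omegaDiff_mul_omegaDiff]
  simp only [omegaDiff, hJ.omegaPow_mul_omegaPow, hJ.omegaPow_omegaPow_mul]
  abel

theorem of_mul_omegaDiff (m x : M) :
    of K M m * omegaDiff K x = omegaDiff K (m * x) - omegaDiff K (m * omegaPow x) := by
  simp only [omegaDiff, mul_sub, ← map_mul, hJ.omegaPow_mul_omegaPow]
  abel

theorem mul_mem_omegaDiffSpan (a : MonoidAlgebra K M) {z : MonoidAlgebra K M}
    (hz : z ∈ omegaDiffSpan K M) : a * z ∈ omegaDiffSpan K M := by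
  induction a using MonoidAlgebra.induction_on with
  | of m =>
    refine (span_le.2 (Set.range_subset_iff.2 fun x => ?_) :
      omegaDiffSpan K M ≤ (omegaDiffSpan K M).comap (LinearMap.mulLeft K (of K M m))) hz
    simp only [SetLike.mem_coe, mem_comap, LinearMap.mulLeft_apply, hJ.of_mul_omegaDiff K]
    exact sub_mem (omegaDiff_mem_omegaDiffSpan K _) (omegaDiff_mem_omegaDiffSpan K _)
  | add a b ha hb => rw [add_mul]; exact add_mem ha hb
  | smul c a ha => rw [smul_mul_assoc]; exact smul_mem _ c ha

end JTrivial

omit hJ in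
variable (M) in
noncomputable def jHeightSpan (k : ℕ) : Submodule K (MonoidAlgebra K M) :=
  span K (of K M '' {y | jHeight y < k})

namespace JTrivial

theorem omegaDiffSpan_mul_jHeightSpan_le (k : ℕ) :
    omegaDiffSpan K M * jHeightSpan K M (k + 1) ≤ jHeightSpan K M k := by
  rw [omegaDiffSpan, jHeightSpan, span_mul_span, span_le]
  rintro _ ⟨_, ⟨x, rfl⟩, _, ⟨y, hy, rfl⟩, rfl⟩
  dsimp only
  have hexp : omegaDiff K x * of K M y = of K M (x * y) - of K M (omegaPow x * y) := by
    simp only [omegaDiff, sub_mul, ← map_mul]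
  rw [SetLike.mem_coe, hexp]
  by_cases hxy : x * y = y
  · rw [hxy, hJ.omegaPow_mul_eq_self_iff.2 hxy, sub_self]
    exact zero_mem _
  have hlt : jHeight (x * y) < k :=
    (hJ.jHeight_lt_jHeight (leJ_mul_left x y) hxy).trans_le (Nat.lt_succ_iff.1 hy)
  have hle : jHeight (omegaPow x * y) ≤ jHeight (x * y) := jHeight_le_jHeight <| by
    rw [← hJ.omegaPow_mul_self x, mul_assoc]
    exact leJ_mul_left _ _
  exact sub_mem (subset_span ⟨_, hlt, rfl⟩) (subset_span ⟨_, hle.trans_lt hlt, rfl⟩)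

theorem isNilpotent_of_mem_omegaDiffSpan {z : MonoidAlgebra K M} (hz : z ∈ omegaDiffSpan K M) :
    IsNilpotent z := by
  have hdescend : ∀ j k, ∀ w ∈ jHeightSpan K M (k + j), z ^ j * w ∈ jHeightSpan K M k := by
    intro j
    induction j with
    | zero => simp
    | succ j ih =>
      intro k w hw
      rw [pow_succ, mul_assoc]
      exact ih k _ (hJ.omegaDiffSpan_mul_jHeightSpan_le K _ (mul_mem_mul hz hw))
  refine ⟨jHeight (1 : M) + 1, ?_⟩
  have h := hdescend (jHeight (1 : M) + 1) 0 1 (subset_span ⟨1, by simp, map_one _⟩)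
  simpa [jHeightSpan] using h

theorem omegaDiffSpan_le_jacobson :
    omegaDiffSpan K M ≤ (Ideal.jacobson (⊥ : Ideal (MonoidAlgebra K M))).restrictScalars K :=
  fun _ hz => Ideal.mem_jacobson_bot_of_forall_isNilpotent_mul fun a =>
    hJ.isNilpotent_of_mem_omegaDiffSpan K (hJ.mul_mem_omegaDiffSpan K a hz)

end JTrivial

end CommRing

section Field

variable [Field K] (hJ : JTrivial M)
include hJ

namespace JTrivial

theorem fixChar_eq_zero_of_mem_jacobson (e : M) {z : MonoidAlgebra K M}
    (hz : z ∈ Ideal.jacobson (⊥ : Ideal (MonoidAlgebra K M))) : hJ.fixChar K e z = 0 :=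
  (sInf_le ⟨bot_le, RingHom.ker_isMaximal_of_surjective (hJ.fixChar K e)
    fun c => ⟨algebraMap K _ c, AlgHom.commutes _ c⟩⟩ :
      Ideal.jacobson ⊥ ≤ RingHom.ker (hJ.fixChar K e)) hz

variable [Finite M]

theorem fixChar_eq_zero_of_mem_omegaDiffSpan (e : M) {z : MonoidAlgebra K M}
    (hz : z ∈ omegaDiffSpan K M) : hJ.fixChar K e z = 0 := by
  refine (span_le.2 (Set.range_subset_iff.2 fun x => ?_) :
    omegaDiffSpan K M ≤ LinearMap.ker (hJ.fixChar K e).toLinearMap) hz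
  rw [SetLike.mem_coe, LinearMap.mem_ker, AlgHom.toLinearMap_apply, omegaDiff, map_sub,
    fixChar_of, fixChar_of, if_congr hJ.mul_omegaPow_eq_self_iff rfl rfl, sub_self]

theorem omegaDiffSpan_sup_span_idempotents :
    omegaDiffSpan K M ⊔ span K (Set.range fun e : {e : M // IsIdempotentElem e} => of K M e) =
      ⊤ := by
  refine Submodule.eq_top_iff'.2 fun z => ?_
  induction z using MonoidAlgebra.induction_on with
  | of x =>
    rw [← sub_add_cancel (of K M x) (of K M (omegaPow x))]
    exact add_mem (mem_sup_left (omegaDiff_mem_omegaDiffSpan K x))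
      (mem_sup_right (subset_span ⟨⟨_, hJ.isIdempotentElem_omegaPow x⟩, rfl⟩))
  | add a b ha hb => exact add_mem ha hb
  | smul c a ha => exact smul_mem _ c ha

theorem eq_zero_of_mem_span_idempotents {w : MonoidAlgebra K M}
    (hw : w ∈ span K (Set.range fun e : {e : M // IsIdempotentElem e} => of K M e))
    (hchar : ∀ e : M, IsIdempotentElem e → hJ.fixChar K e w = 0) : w = 0 := by
  have := Fintype.ofFinite {e : M // IsIdempotentElem e}
  obtain ⟨c, rfl⟩ := (mem_span_range_iff_exists_fun K).1 hw
  have hc := coeff_eq_zero_of_triangular (s := Finset.univ) (c := c)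
    (fun e : {e : M // IsIdempotentElem e} => of K M e)
    (fun e => (hJ.fixChar K e).toLinearMap) (fun e => jHeight (e : M))
    (fun e _ => by
      rw [AlgHom.toLinearMap_apply, fixChar_of, if_pos e.2.eq]
      exact one_ne_zero)
    (fun e _ f _ hle hne => by
      simp only [AlgHom.toLinearMap_apply, fixChar_of]
      refine if_neg fun h => hne (Subtype.ext ?_)
      exact (hJ.eq_of_leJ_of_jHeight_le ⟨e, 1, by rw [mul_one, h]⟩ hle).symm)
    (fun e _ => hchar e e.2)
  exact Finset.sum_eq_zero fun e he => by rw [hc e he, zero_smul]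

theorem jacobson_restrictScalars_eq :
    (Ideal.jacobson (⊥ : Ideal (MonoidAlgebra K M))).restrictScalars K = omegaDiffSpan K M := by
  refine le_antisymm (fun z hz => ?_) (hJ.omegaDiffSpan_le_jacobson K)
  obtain ⟨n, hn, w, hw, rfl⟩ :=
    mem_sup.1 ((hJ.omegaDiffSpan_sup_span_idempotents K).symm ▸ mem_top : z ∈ _)
  suffices w = 0 by rwa [this, add_zero]
  refine hJ.eq_zero_of_mem_span_idempotents K hw fun e _ => ?_
  have := hJ.fixChar_eq_zero_of_mem_jacobson K e hz
  rwa [map_add, hJ.fixChar_eq_zero_of_mem_omegaDiffSpan K e hn, zero_add] at this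

end JTrivial

end Field

section Quotient

variable [Field K]

noncomputable def sandwichCoeff (q : M) : MonoidAlgebra K M →ₗ[K] K :=
  (MonoidAlgebra.basis M K).constr K fun y => if lfixF q * y * rfixF q = q then 1 else 0

theorem sandwichCoeff_of (q y : M) :
    sandwichCoeff K q (of K M y) = if lfixF q * y * rfixF q = q then 1 else 0 := by
  rw [of_apply, ← basis_apply, sandwichCoeff, Module.Basis.constr_basis]

variable [Finite M] (hJ : JTrivial M)
include hJ

namespace JTrivial

/-- The four terms of `(a - a^ω)(b - b^ω)` cancel in pairs: either `lfix q` absorbs both `a`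
and `a^ω`, or `rfix q` absorbs both `b` and `b^ω`, or else, `q` having no non-trivial
factorization, none of the four products lies over `q`. -/
theorem sandwichCoeff_omegaDiff_mul_omegaDiff {q : M} (hq : q ∈ quiverSet M) (a b : M) :
    sandwichCoeff K q (omegaDiff K a * omegaDiff K b) = 0 := by
  rw [omegaDiff_mul_omegaDiff]
  simp only [map_add, map_sub, sandwichCoeff_of]
  by_cases ha : lfixF q * a = lfixF q
  · have h : ∀ y, lfixF q * (a * y) * rfixF q = lfixF q * (omegaPow a * y) * rfixF q :=
      fun y => by simp only [← mul_assoc, ha, hJ.mul_omegaPow_eq_self_iff.2 ha]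
    simp only [h]
    ring
  by_cases hb : b * rfixF q = rfixF q
  · have h : ∀ y, lfixF q * (y * b) * rfixF q = lfixF q * (y * omegaPow b) * rfixF q :=
      fun y => by simp only [mul_assoc, hb, hJ.omegaPow_mul_eq_self_iff.2 hb]
    simp only [h]
    ring
  have ha' : lfixF q * omegaPow a ≠ lfixF q := fun h => ha (hJ.mul_omegaPow_eq_self_iff.1 h)
  have hb' : omegaPow b * rfixF q ≠ rfixF q := fun h => hb (hJ.omegaPow_mul_eq_self_iff.1 h)
  rw [if_neg (hJ.lfixF_mul_mul_rfixF_ne hq ha hb), if_neg (hJ.lfixF_mul_mul_rfixF_ne hq ha hb'),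
    if_neg (hJ.lfixF_mul_mul_rfixF_ne hq ha' hb), if_neg (hJ.lfixF_mul_mul_rfixF_ne hq ha' hb')]
  ring

theorem omegaDiffSpan_mul_self_le_ker {q : M} (hq : q ∈ quiverSet M) :
    omegaDiffSpan K M * omegaDiffSpan K M ≤ LinearMap.ker (sandwichCoeff K q) := by
  rw [omegaDiffSpan, span_mul_span, span_le]
  rintro _ ⟨_, ⟨a, rfl⟩, _, ⟨b, rfl⟩, rfl⟩
  exact hJ.sandwichCoeff_omegaDiff_mul_omegaDiff K hq a b

theorem sandwichCoeff_omegaDiff {q x : M} (hq : ¬IsIdempotentElem q)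
    (hle : jHeight x ≤ jHeight q) :
    sandwichCoeff K q (omegaDiff K x) = if x = q then 1 else 0 := by
  have hω : lfixF q * omegaPow x * rfixF q ≠ q := fun h => by
    have hqx : leJ q (omegaPow x) := ⟨_, _, h.symm⟩
    obtain rfl : x = q :=
      (hJ.eq_of_leJ_of_jHeight_le (leJ_trans hqx (hJ.leJ_omegaPow x)) hle).symm
    exact hq (hJ.antisymm (hJ.leJ_omegaPow x) hqx ▸ hJ.isIdempotentElem_omegaPow x)
  have hx : lfixF q * x * rfixF q = q ↔ x = q :=
    ⟨fun h => (hJ.eq_of_leJ_of_jHeight_le ⟨_, _, h.symm⟩ hle).symm,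
      by rintro rfl; rw [hJ.lfixF_mul_self, hJ.mul_rfixF_self]⟩
  rw [omegaDiff, map_sub, sandwichCoeff_of, sandwichCoeff_of, if_neg hω, if_congr hx rfl rfl,
    sub_zero]

theorem linearIndependent_mkQ_omegaDiff :
    LinearIndependent K fun x : quiverSet M =>
      (omegaDiffSpan K M * omegaDiffSpan K M).mkQ (omegaDiff K (x : M)) := by
  refine linearIndependent_iff'.2 fun s c hs => coeff_eq_zero_of_triangular _
    (fun q : quiverSet M => (omegaDiffSpan K M * omegaDiffSpan K M).liftQ (sandwichCoeff K q)
      (hJ.omegaDiffSpan_mul_self_le_ker K q.2))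
    (fun x => jHeight (x : M)) (fun q _ => ?_) (fun q _ x _ hle hne => ?_)
    (fun q _ => by rw [hs, map_zero])
  · simp [hJ.sandwichCoeff_omegaDiff K q.2.1 le_rfl]
  · simp [hJ.sandwichCoeff_omegaDiff K q.2.1 hle, Subtype.coe_ne_coe.2 hne]

theorem mkQ_omegaDiff_mem_span (x : M) :
    (omegaDiffSpan K M * omegaDiffSpan K M).mkQ (omegaDiff K x) ∈
      span K (Set.range fun q : quiverSet M =>
        (omegaDiffSpan K M * omegaDiffSpan K M).mkQ (omegaDiff K (q : M))) := by
  induction hn : jHeight x using Nat.strong_induction_on generalizing x with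
  | _ n ih =>
  by_cases hid : IsIdempotentElem x
  · rw [omegaDiff, hJ.omegaPow_eq_self hid, sub_self, map_zero]
    exact zero_mem _
  by_cases hxq : x ∈ quiverSet M
  · exact subset_span ⟨⟨x, hxq⟩, rfl⟩
  obtain ⟨u, v, rfl, h₁, h₂, h₃⟩ := hJ.exists_mul_eq_jHeight_lt hid hxq
  have hR2 : (omegaDiffSpan K M * omegaDiffSpan K M).mkQ (omegaDiff K u * omegaDiff K v) = 0 :=
    (Quotient.mk_eq_zero _).2
      (mul_mem_mul (omegaDiff_mem_omegaDiffSpan K u) (omegaDiff_mem_omegaDiffSpan K v))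
  rw [hJ.omegaDiff_mul_eq K, map_sub, map_add, map_add, hR2, zero_add]
  exact sub_mem (add_mem (ih _ (hn ▸ h₁) _ rfl) (ih _ (hn ▸ h₂) _ rfl))
    (ih _ (hn ▸ h₃) _ rfl)

theorem span_mkQ_omegaDiff_eq :
    span K (Set.range fun q : quiverSet M =>
      (omegaDiffSpan K M * omegaDiffSpan K M).mkQ (omegaDiff K (q : M))) =
      (omegaDiffSpan K M).map (omegaDiffSpan K M * omegaDiffSpan K M).mkQ := by
  refine le_antisymm (span_le.2 (Set.range_subset_iff.2 fun q =>
    ⟨_, omegaDiff_mem_omegaDiffSpan K _, rfl⟩)) ?_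
  refine (map_span_le _ _ _).2 fun _ ⟨x, hx⟩ => ?_
  exact hx ▸ hJ.mkQ_omegaDiff_mem_span K x

theorem finrank_map_mkQ_omegaDiffSpan :
    Module.finrank K ((omegaDiffSpan K M).map (omegaDiffSpan K M * omegaDiffSpan K M).mkQ) =
      Nat.card (quiverSet M) := by
  have := Fintype.ofFinite (quiverSet M)
  rw [← hJ.span_mkQ_omegaDiff_eq K, finrank_span_eq_card (hJ.linearIndependent_mkQ_omegaDiff K),
    Nat.card_eq_fintype_card]

end JTrivial

end Quotient

end MonoidAlgebra

/-- Let `R` be the Jacobson radical of `K[M]` (regarded as a `K`-subspace) and `R²` its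
square.  The images of the elements `x - x^ω`, for `x ∈ Q(M)`, form a `K`-basis of `R/R²`;
in particular `dim_K R/R² = |Q(M)|`. -/
theorem radical_quotient_basis (K : Type*) [Field K] {M : Type*} [Monoid M] [Fintype M]
    (hJ : JTrivial M) :
    LinearIndependent K
      (fun x : quiverSet M =>
        (Submodule.restrictScalars K (Ideal.jacobson (⊥ : Ideal (MonoidAlgebra K M))) *
          Submodule.restrictScalars K (Ideal.jacobson (⊥ : Ideal (MonoidAlgebra K M)))).mkQ
          (MonoidAlgebra.of K M (x : M) - MonoidAlgebra.of K M (omegaPow (x : M)))) ∧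
    Submodule.span K
      (Set.range (fun x : quiverSet M =>
        (Submodule.restrictScalars K (Ideal.jacobson (⊥ : Ideal (MonoidAlgebra K M))) *
          Submodule.restrictScalars K (Ideal.jacobson (⊥ : Ideal (MonoidAlgebra K M)))).mkQ
          (MonoidAlgebra.of K M (x : M) - MonoidAlgebra.of K M (omegaPow (x : M)))))
      = Submodule.map
          (Submodule.restrictScalars K (Ideal.jacobson (⊥ : Ideal (MonoidAlgebra K M))) *
            Submodule.restrictScalars K (Ideal.jacobson (⊥ : Ideal (MonoidAlgebra K M)))).mkQ
          (Submodule.restrictScalars K (Ideal.jacobson (⊥ : Ideal (MonoidAlgebra K M)))) ∧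
    Module.finrank K
      (Submodule.map
        (Submodule.restrictScalars K (Ideal.jacobson (⊥ : Ideal (MonoidAlgebra K M))) *
          Submodule.restrictScalars K (Ideal.jacobson (⊥ : Ideal (MonoidAlgebra K M)))).mkQ
        (Submodule.restrictScalars K (Ideal.jacobson (⊥ : Ideal (MonoidAlgebra K M)))))
      = Nat.card (quiverSet M) := by
  rw [hJ.jacobson_restrictScalars_eq K]
  exact ⟨hJ.linearIndependent_mkQ_omegaDiff K, hJ.span_mkQ_omegaDiff_eq K,
    hJ.finrank_map_mkQ_omegaDiffSpan K⟩
end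

section
/- Let P be a finite poset. (1) Let I ⊆ P be a subset that contains all minimal elements of P and is stable under joins (for every S ⊆ I, every join of S belongs to I). Then for every x ∈ P the set {y ∈ I : y ≤ x} has a greatest element, denoted sup_I(x), and the map sup_I : P → P is an idempotent element of OR(P). (2) Conversely, if f ∈ OR(P) is idempotent, then its image I := im(f) contains all minimal elements of P, is stable under joins, every element of I is a fixed point of f, and f(x) = sup_I(x) for all x ∈ P. Hence the idempotents of OR(P) are exactly the maps sup_I, for I ranging over the subsets of P containing all minimal elements and stable under joins. -/
/-- `z` is a join of `S`: a minimal element among the common upper bounds of `S`.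
In particular, the joins of the empty set are the minimal elements of the poset. -/
def IsJoinOf {P : Type*} [PartialOrder P] (S : Set P) (z : P) : Prop :=
  (∀ x ∈ S, x ≤ z) ∧ ∀ w : P, (∀ x ∈ S, x ≤ w) → w ≤ z → w = z

/-! For `I ⊆ P`, `sup_I x` is the greatest element of `I ∩ Iic x`. In a well-founded poset this
exists for every `x` exactly when `I` is stable under joins: the join of `I ∩ Iic x` lying below
`x` is that greatest element, and conversely a join `z` of `S ⊆ I` satisfies `sup_I z = z` because
`sup_I z` is an upper bound of `S` below `z`. An idempotent `f ∈ OR(P)` is `sup_I` for its image: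
if `y = f a ≤ x` then `y = f y ≤ f x`. -/

section

open Set

variable {P : Type*} [PartialOrder P]

theorem isJoinOf_iff_minimal {S : Set P} {z : P} :
    IsJoinOf S z ↔ Minimal (· ∈ upperBounds S) z := by
  rw [minimal_iff]
  exact ⟨fun h => ⟨h.1, fun w hw hwz => (h.2 w hw hwz).symm⟩,
    fun h => ⟨h.1, fun w hw hwz => (h.2 hw hwz).symm⟩⟩

theorem exists_isJoinOf_le [WellFoundedLT P] {S : Set P} {x : P} (hx : x ∈ upperBounds S) :
    ∃ z ≤ x, IsJoinOf S z := by
  simpa only [isJoinOf_iff_minimal] using exists_minimal_le_of_wellFoundedLT _ x hx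

theorem isGreatest_inter_Iic_iff {I : Set P} {x a : P} :
    IsGreatest (I ∩ Iic x) a ↔ a ∈ I ∧ a ≤ x ∧ ∀ y ∈ I, y ≤ x → y ≤ a :=
  ⟨fun h => ⟨h.1.1, h.1.2, fun _ hy hyx => h.2 ⟨hy, hyx⟩⟩,
    fun h => ⟨⟨h.1, h.2.1⟩, fun y hy => h.2.2 y hy.1 hy.2⟩⟩

theorem exists_isGreatest_inter_Iic [WellFoundedLT P] {I : Set P}
    (hI : ∀ S ⊆ I, ∀ z, IsJoinOf S z → z ∈ I) (x : P) : ∃ a, IsGreatest (I ∩ Iic x) a := by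
  obtain ⟨z, hzx, hz⟩ := exists_isJoinOf_le (S := I ∩ Iic x) fun _ hy => hy.2
  exact ⟨z, ⟨hI _ inter_subset_left z hz, hzx⟩, hz.1⟩

theorem IsJoinOf.mem_of_isGreatest_inter_Iic {I S : Set P} {z a : P} (hz : IsJoinOf S z)
    (hS : S ⊆ I) (ha : IsGreatest (I ∩ Iic z) a) : z ∈ I := by
  have haz : a = z := hz.2 a (fun y hy => ha.2 ⟨hS hy, hz.1 y hy⟩) ha.1.2
  exact haz ▸ ha.1.1

theorem IsMin.mem_of_isGreatest_inter_Iic {I : Set P} {x a : P} (hx : IsMin x)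
    (ha : IsGreatest (I ∩ Iic x) a) : x ∈ I :=
  hx.eq_of_le ha.1.2 ▸ ha.1.1

section sup

variable {I : Set P} {g : P → P} (hg : ∀ x, IsGreatest (I ∩ Iic x) (g x))
include hg

theorem monotone_of_forall_isGreatest_inter_Iic : Monotone g :=
  fun _ _ hab => (hg _).2 ⟨(hg _).1.1, (hg _).1.2.trans hab⟩

theorem comp_self_of_forall_isGreatest_inter_Iic : g ∘ g = g :=
  funext fun x => (hg (g x)).unique ⟨⟨(hg x).1.1, le_rfl⟩, fun _ hy => hy.2⟩

end sup

theorem isGreatest_range_inter_Iic {f : P → P} (hf : Monotone f) (hreg : ∀ x, f x ≤ x)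
    (hidem : f ∘ f = f) (x : P) : IsGreatest (range f ∩ Iic x) (f x) := by
  refine ⟨⟨mem_range_self x, hreg x⟩, ?_⟩
  rintro _ ⟨⟨a, rfl⟩, hax⟩
  calc f a = f (f a) := (congrFun hidem a).symm
    _ ≤ f x := hf hax

end

/-- Characterization of the idempotents of the monoid `OR(P)` of order preserving regressive
functions on a finite poset `P`:
(1) if `I ⊆ P` contains all minimal elements and is stable under joins, then for every `x`
the set `{y ∈ I | y ≤ x}` has a greatest element `sup_I(x)`, and `sup_I` is an idempotent,
order preserving and regressive function;
(2) conversely, the image of any idempotent `f ∈ OR(P)` contains all minimal elements, is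
stable under joins, consists of fixed points of `f`, and `f x` is the greatest element of
`{y ∈ im f | y ≤ x}` for all `x`. -/
theorem idempotents_of_OR {P : Type*} [PartialOrder P] [Fintype P] :
    (∀ I : Set P,
      (∀ x : P, IsMin x → x ∈ I) →
      (∀ S : Set P, S ⊆ I → ∀ z : P, IsJoinOf S z → z ∈ I) →
      ∃ g : P → P,
        (∀ x : P, g x ∈ I ∧ g x ≤ x ∧ ∀ y ∈ I, y ≤ x → y ≤ g x) ∧
        Monotone g ∧ (∀ x : P, g x ≤ x) ∧ g ∘ g = g) ∧
    (∀ f : P → P, Monotone f → (∀ x : P, f x ≤ x) → f ∘ f = f →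
      (∀ x : P, IsMin x → x ∈ Set.range f) ∧
      (∀ S : Set P, S ⊆ Set.range f → ∀ z : P, IsJoinOf S z → z ∈ Set.range f) ∧
      (∀ y ∈ Set.range f, f y = y) ∧
      (∀ x : P, f x ∈ Set.range f ∧ f x ≤ x ∧ ∀ y ∈ Set.range f, y ≤ x → y ≤ f x)) := by
  refine ⟨fun I _ hI => ?_, fun f hf hreg hidem => ?_⟩
  · choose g hg using exists_isGreatest_inter_Iic hI
    exact ⟨g, fun x => isGreatest_inter_Iic_iff.1 (hg x),
      monotone_of_forall_isGreatest_inter_Iic hg, fun x => (hg x).1.2,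
      comp_self_of_forall_isGreatest_inter_Iic hg⟩
  · have hg := isGreatest_range_inter_Iic hf hreg hidem
    refine ⟨fun x hx => hx.mem_of_isGreatest_inter_Iic (hg x),
      fun S hS z hz => hz.mem_of_isGreatest_inter_Iic hS (hg z), ?_,
      fun x => isGreatest_inter_Iic_iff.1 (hg x)⟩
    rintro _ ⟨a, rfl⟩
    exact congrFun hidem a
end

section
/- Let L be a finite meet semi-lattice. For a, b ∈ L with b ≤ a, define e_{a,b} : L → L by e_{a,b}(x) = x ∧ b if x ≤ a and e_{a,b}(x) = x otherwise; each e_{a,b} is an element of OR(L). Then the family {e_{a,b} : (a,b) a cover of L, i.e., b < a with no c satisfying b < c < a} minimally generates the idempotents of OR(L): every idempotent of OR(L) belongs to the submonoid of OR(L) generated by this family, and for every cover (a,b), the element e_{a,b} does not belong to the submonoid generated by the remaining elements of the family. -/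
/-- The monoid `OR(P)` of order preserving regressive functions on a poset `P`, as a
submonoid of `Function.End P` (functions under composition). -/
def ORMonoid (P : Type*) [PartialOrder P] : Submonoid (Function.End P) where
  carrier := {f : Function.End P | Monotone f ∧ ∀ x : P, f x ≤ x}
  one_mem' := ⟨monotone_id, fun _ => le_rfl⟩
  mul_mem' := fun {f g} hf hg =>
    ⟨hf.1.comp hg.1, fun x => le_trans (hf.2 (g x)) (hg.2 x)⟩

open Classical

/-- For `b ≤ a` in a meet semi-lattice, the function `e_{a,b}` sending `x` to `x ⊓ b`
if `x ≤ a` and to `x` otherwise. -/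
noncomputable def eab {L : Type*} [SemilatticeInf L] (a b : L) : Function.End L :=
  fun x => if x ≤ a then x ⊓ b else x

/-!
Generation: an idempotent `f ∈ OR(L)` factors as `e_{a, f a} * f'`, where `a` is a maximal point
moved by `f` and `f'` is `f` with `a` made fixed; and `e_{a,b}` factors along a maximal chain from
`b` to `a` into `e_{a',b'}` with `b' ⋖ a'`.

Minimality: call `f` an `(a, b)`-step if `f a = b` and `f` fixes everything above `a`. If a product
of regressive maps is an `(a, b)`-step with `b ⋖ a`, one of its factors is, since the intermediate
values of `a` all lie in `[b, a]`. The only `(a, b)`-step among the cover generators is `e_{a,b}`.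
-/

section Step

variable {P : Type*} [PartialOrder P]

def SendsFixingAbove (a b : P) (f : Function.End P) : Prop :=
  f a = b ∧ ∀ x, a < x → f x = x

lemma SendsFixingAbove.of_mul {a b : P} (hab : b ⋖ a) {f g : Function.End P}
    (hf : ∀ x, f x ≤ x) (hg : ∀ x, g x ≤ x) (h : SendsFixingAbove a b (f * g)) :
    SendsFixingAbove a b f ∨ SendsFixingAbove a b g := by
  have fixed_of_mul : ∀ x, f (g x) = x → f x = x ∧ g x = x := fun x hx => by
    have hgx : g x = x := le_antisymm (hg x) (hx.symm.le.trans (hf (g x)))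
    rw [hgx] at hx
    exact ⟨hx, hgx⟩
  rcases hab.eq_or_eq (h.1 ▸ hf (g a)) (hg a) with hga | hga
  · exact Or.inr ⟨hga, fun x hx => (fixed_of_mul x (h.2 x hx)).2⟩
  · refine Or.inl ⟨?_, fun x hx => (fixed_of_mul x (h.2 x hx)).1⟩
    rw [← hga]
    exact h.1

lemma not_sendsFixingAbove_of_mem_closure {a b : P} (hab : b ⋖ a) {s : Set (Function.End P)}
    (hs : s ⊆ ORMonoid P) (hstep : ∀ g ∈ s, ¬ SendsFixingAbove a b g) {f : Function.End P}
    (hf : f ∈ Submonoid.closure s) : ¬ SendsFixingAbove a b f := by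
  induction hf using Submonoid.closure_induction with
  | mem g hg => exact hstep g hg
  | one => exact fun h => hab.ne h.1.symm
  | mul f g hf hg ihf ihg =>
    intro h
    have hle := Submonoid.closure_le.2 hs
    exact (h.of_mul hab (hle hf).2 (hle hg).2).elim ihf ihg

end Step

section Update

variable {α : Type*}

noncomputable def fixAt (f : Function.End α) (a : α) : Function.End α :=
  fun x => if x = a then a else f x

lemma fixAt_self (f : Function.End α) (a : α) : fixAt f a a = a := if_pos rfl

lemma fixAt_of_ne (f : Function.End α) {a x : α} (hx : x ≠ a) : fixAt f a x = f x := if_neg hx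

lemma isIdempotentElem_fixAt {f : Function.End α} (hf : IsIdempotentElem f) (a : α) :
    IsIdempotentElem (fixAt f a) := by
  funext x
  change fixAt f a (fixAt f a x) = fixAt f a x
  by_cases hx : x = a
  · rw [hx, fixAt_self, fixAt_self]
  · rw [fixAt_of_ne f hx]
    by_cases hfx : f x = a
    · rw [hfx, fixAt_self]
    · rw [fixAt_of_ne f hfx]
      exact congrFun hf x

lemma ncard_fixAt_lt [Finite α] {f : Function.End α} {a : α} (ha : f a ≠ a) :
    {x | fixAt f a x ≠ x}.ncard < {x | f x ≠ x}.ncard := by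
  have hset : {x | fixAt f a x ≠ x} = {x | f x ≠ x} \ {a} := by
    ext x
    by_cases hx : x = a
    · simp [hx, fixAt_self]
    · simp [hx, fixAt_of_ne f hx]
  rw [hset]
  exact Set.ncard_sdiff_singleton_lt_of_mem ha

variable [PartialOrder α]

lemma fixAt_mem_ORMonoid {f : Function.End α} (hf : f ∈ ORMonoid α) {a : α}
    (habove : ∀ x, a < x → f x = x) : fixAt f a ∈ ORMonoid α := by
  refine ⟨fun x y hxy => ?_, fun x => ?_⟩
  · by_cases hy : y = a
    · subst hy
      by_cases hx : x = y
      · rw [hx]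
      · rw [fixAt_self, fixAt_of_ne f hx]
        exact (hf.2 x).trans hxy
    · rw [fixAt_of_ne f hy]
      by_cases hx : x = a
      · subst hx
        have hlt : x < y := lt_of_le_of_ne hxy (Ne.symm hy)
        rw [fixAt_self, habove y hlt]
        exact hxy
      · rw [fixAt_of_ne f hx]
        exact hf.1 hxy
  · by_cases hx : x = a
    · rw [hx, fixAt_self]
    · rw [fixAt_of_ne f hx]
      exact hf.2 x

end Update

section Eab

variable {L : Type*} [SemilatticeInf L]

def coverGenerators (L : Type*) [SemilatticeInf L] : Set (Function.End L) :=
  {g | ∃ a b : L, b ⋖ a ∧ g = eab a b}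

lemma eab_of_le {a b x : L} (h : x ≤ a) : eab a b x = x ⊓ b := if_pos h

lemma eab_of_not_le {a b x : L} (h : ¬ x ≤ a) : eab a b x = x := if_neg h

lemma eab_le (a b x : L) : eab a b x ≤ x := by
  by_cases h : x ≤ a
  · rw [eab_of_le h]
    exact inf_le_left
  · rw [eab_of_not_le h]

lemma eab_monotone (a b : L) : Monotone (eab a b) := by
  intro x y hxy
  by_cases hy : y ≤ a
  · rw [eab_of_le (hxy.trans hy), eab_of_le hy]
    exact inf_le_inf_right b hxy
  · rw [eab_of_not_le hy]
    exact (eab_le a b x).trans hxy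

lemma eab_mem_ORMonoid (a b : L) : eab a b ∈ ORMonoid L :=
  ⟨eab_monotone a b, eab_le a b⟩

lemma eab_self (a : L) : eab a a = 1 := by
  funext x
  by_cases h : x ≤ a
  · exact (eab_of_le h).trans (inf_eq_left.2 h)
  · exact eab_of_not_le h

lemma eab_mul_eab {a b c : L} (hbc : b ≤ c) (hca : c ≤ a) : eab c b * eab a c = eab a b := by
  funext x
  change eab c b (eab a c x) = eab a b x
  by_cases h : x ≤ a
  · rw [eab_of_le h, eab_of_le h, eab_of_le inf_le_right, inf_assoc, inf_eq_right.2 hbc]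
  · rw [eab_of_not_le h, eab_of_not_le h, eab_of_not_le fun hxc => h (hxc.trans hca)]

lemma sendsFixingAbove_eab {a b : L} (hba : b ≤ a) : SendsFixingAbove a b (eab a b) :=
  ⟨(eab_of_le le_rfl).trans (inf_eq_right.2 hba), fun _ hx => eab_of_not_le hx.not_ge⟩

lemma SendsFixingAbove.eq_of_eab {a b a' b' : L} (hab : b ≠ a) (hcov : b' ⋖ a')
    (h : SendsFixingAbove a b (eab a' b')) : a' = a ∧ b' = b := by
  have haa' : a ≤ a' := by
    by_contra hna
    exact hab (h.1.symm.trans (eab_of_not_le hna))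
  have ha' : a' = a := by
    by_contra hne
    have hlt : a < a' := lt_of_le_of_ne haa' (Ne.symm hne)
    have := h.2 a' hlt
    rw [eab_of_le le_rfl, inf_eq_right.2 hcov.le] at this
    exact hcov.ne this
  subst ha'
  refine ⟨rfl, ?_⟩
  rw [← h.1, eab_of_le le_rfl, inf_eq_right.2 hcov.le]

lemma eq_eab_mul_fixAt {f : Function.End L} (hf : f ∈ ORMonoid L)
    (hidem : IsIdempotentElem f) (a : L) : f = eab a (f a) * fixAt f a := by
  funext x
  change f x = eab a (f a) (fixAt f a x)
  by_cases hx : x = a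
  · subst hx
    rw [fixAt_self, eab_of_le le_rfl, inf_eq_right.2 (hf.2 x)]
  · rw [fixAt_of_ne f hx]
    by_cases hfx : f x ≤ a
    · have hfxa : f x ≤ f a := (congrFun hidem x).symm.le.trans (hf.1 hfx)
      rw [eab_of_le hfx, inf_eq_left.2 hfxa]
    · rw [eab_of_not_le hfx]

variable [Finite L]

lemma eab_mem_closure_coverGenerators {a b : L} (hba : b ≤ a) :
    eab a b ∈ Submonoid.closure (coverGenerators L) := by
  induction a using WellFoundedLT.induction generalizing b with
  | _ a ih =>
    rcases hba.eq_or_lt with rfl | hlt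
    · rw [eab_self]
      exact Submonoid.one_mem _
    · obtain ⟨c, hbc, hca⟩ := exists_le_covBy_of_lt hlt
      rw [← eab_mul_eab hbc hca.le]
      exact Submonoid.mul_mem _ (ih c hca.lt hbc) (Submonoid.subset_closure ⟨a, c, hca, rfl⟩)

lemma mem_closure_coverGenerators_of_isIdempotentElem {f : Function.End L}
    (hf : f ∈ ORMonoid L) (hidem : IsIdempotentElem f) :
    f ∈ Submonoid.closure (coverGenerators L) := by
  by_cases hmoved : {x | f x ≠ x}.Nonempty
  · obtain ⟨a, ha⟩ := (Set.toFinite _).exists_maximal hmoved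
    have habove : ∀ x, a < x → f x = x := fun x hx => by
      by_contra hfx
      exact hx.not_ge (ha.2 hfx hx.le)
    rw [eq_eab_mul_fixAt hf hidem a]
    exact Submonoid.mul_mem _ (eab_mem_closure_coverGenerators (hf.2 a))
      (mem_closure_coverGenerators_of_isIdempotentElem (fixAt_mem_ORMonoid hf habove)
        (isIdempotentElem_fixAt hidem a))
  · have hf1 : f = 1 := funext fun x => by
      by_contra hx
      exact hmoved ⟨x, hx⟩
    rw [hf1]
    exact Submonoid.one_mem _
termination_by {x | f x ≠ x}.ncard
decreasing_by exact ncard_fixAt_lt ha.1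

end Eab

/-- Let `L` be a finite meet semi-lattice.  Each `e_{a,b}` (for `b ≤ a`) lies in `OR(L)`, and
the family `{e_{a,b} : (a,b) a cover of L}` minimally generates the idempotents of `OR(L)`:
every idempotent of `OR(L)` lies in the submonoid generated by this family, and no member
`e_{a,b}` of the family lies in the submonoid generated by the remaining members. -/
theorem eab_minimally_generate_idempotents {L : Type*} [SemilatticeInf L] [Fintype L] :
    (∀ a b : L, b ≤ a → eab a b ∈ ORMonoid L) ∧
    (∀ f : Function.End L, f ∈ ORMonoid L → IsIdempotentElem f →
      f ∈ Submonoid.closure {g : Function.End L | ∃ a b : L, b ⋖ a ∧ g = eab a b}) ∧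
    (∀ a b : L, b ⋖ a →
      eab a b ∉ Submonoid.closure
        ({g : Function.End L | ∃ a' b' : L, b' ⋖ a' ∧ g = eab a' b'} \ {eab a b})) := by
  refine ⟨fun a b _ => eab_mem_ORMonoid a b,
    fun f hf hidem => mem_closure_coverGenerators_of_isIdempotentElem hf hidem, ?_⟩
  intro a b hab hmem
  have hgens : coverGenerators L \ {eab a b} ⊆ ORMonoid L :=
    fun g ⟨⟨a', b', _, hg⟩, _⟩ => hg ▸ eab_mem_ORMonoid a' b'
  have hother : ∀ g ∈ coverGenerators L \ {eab a b}, ¬ SendsFixingAbove a b g := by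
    rintro g ⟨⟨a', b', hcov, rfl⟩, hne⟩ hstep
    obtain ⟨rfl, rfl⟩ := hstep.eq_of_eab hab.ne hcov
    exact hne rfl
  exact not_sendsFixingAbove_of_mem_closure hab hgens hother hmem (sendsFixingAbove_eab hab.le)
end

section
/- Let K be a field, N ≥ 1, and let NDPF_N be the monoid, under composition, of functions f : {1,…,N} → {1,…,N} that are order preserving and regressive (f(x) ≤ x). For 1 ≤ i ≤ N−1 let π_i ∈ NDPF_N be defined by π_i(i+1) = i and π_i(j) = j for j ≠ i+1. For each subset D ⊆ {1,…,N−1}, define in MonoidAlgebra K NDPF_N the element C_D := (∏_{i ∉ D} (1 − π_i)) · (∏_{i ∈ D} π_i), where the first product is taken over i ∉ D in increasing order of i and the second over i ∈ D in decreasing order of i. Then the family {C_D : D ⊆ {1,…,N−1}} is a complete set of 2^{N−1} nonzero orthogonal idempotents: C_D ≠ 0 and C_D² = C_D for all D, C_D · C_{D'} = 0 whenever D ≠ D', and Σ_{D ⊆ {1,…,N−1}} C_D = 1. -/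
/-!
Write `X_i` for `π_i` in `K[NDPF_N]`, `L_A = ∏↑_{i ∈ A} (1 - X_i)` and `w_D = ∏↓_{i ∈ D} π_i`, so
that `C_D = L_{Dᶜ} w_D`. Completeness is a ring identity, proved by splitting off the least index.

As functions, `w_D` sends `x` to the bottom of its run in `D`, and the increasing word
`∏↑_{i ∈ V} π_i` sends `x` to `x - 1` if `x - 1 ∈ V` and fixes it otherwise. Expanding
`L_A = ∑_{V ⊆ A} (-1)^|V| ∏↑_{i ∈ V} π_i`, the terms for `V` and `V ∪ {s}` cancel as soon as their
neighbour in the product cannot tell `s` from `s + 1`. This kills `w_D L_{Eᶜ}` when `i ∈ D \ E`,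
since `w_D` never takes the value `i + 1`; when `D ⊊ E` it kills every term `L_{Dᶜ} w_D π_V w_E`
of `C_D C_E`, because the function `w_D π_V w_E` identifies some `s ∉ D` with `s + 1`.
Idempotence follows from orthogonality and completeness, and `C_D ≠ 0` because the character
sending `π_i` to `1` for `i ∈ D` and to `0` otherwise sends `C_D` to `1`.
-/

/-- The set `{1, …, N}` as a linearly ordered type. -/
abbrev IccN (N : ℕ) := {k : ℕ // k ∈ Finset.Icc 1 N}

/-- `NDPF N`: the nondecreasing parking functions, i.e. order preserving regressive functions
on `{1, …, N}`. -/
abbrev NDPF (N : ℕ) := {f : IccN N → IccN N // Monotone f ∧ ∀ x : IccN N, f x ≤ x}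

/-- Monoid structure on `NDPF N` under composition, with the product `f * g` acting on the
right: `x.(f * g) = (x.f).g`, i.e. `f * g = g ∘ f`. -/
instance (N : ℕ) : Monoid (NDPF N) where
  one := ⟨id, monotone_id, fun _ => le_rfl⟩
  mul f g := ⟨g.1 ∘ f.1, g.2.1.comp f.2.1,
    fun x => le_trans (g.2.2 (f.1 x)) (f.2.2 x)⟩
  mul_assoc _ _ _ := Subtype.ext rfl
  one_mul _ := Subtype.ext rfl
  mul_one _ := Subtype.ext rfl

/-- The underlying function of the generator `π_i` (for `1 ≤ i ≤ N - 1`): it sends `i + 1`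
to `i` and fixes everything else. -/
def piFun (N i : ℕ) : IccN N → IccN N := fun j =>
  if h : (j : ℕ) = i + 1 ∧ 1 ≤ i ∧ i ≤ N - 1 then
    ⟨i, Finset.mem_Icc.mpr ⟨h.2.1, le_trans h.2.2 (Nat.sub_le N 1)⟩⟩
  else j

lemma piFun_coe (N i : ℕ) (j : IccN N) :
    ((piFun N i j : IccN N) : ℕ)
      = if (j : ℕ) = i + 1 ∧ 1 ≤ i ∧ i ≤ N - 1 then i else (j : ℕ) := by
  unfold piFun
  split_ifs with h <;> rfl

lemma piFun_monotone (N i : ℕ) : Monotone (piFun N i) := by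
  intro a b hab
  have hab' : (a : ℕ) ≤ (b : ℕ) := hab
  refine Subtype.coe_le_coe.mp ?_
  rw [piFun_coe, piFun_coe]
  split_ifs with ha hb hb <;> omega

lemma piFun_regressive (N i : ℕ) (x : IccN N) : piFun N i x ≤ x := by
  refine Subtype.coe_le_coe.mp ?_
  rw [piFun_coe]
  split_ifs with h <;> omega

/-- The generator `π_i` of `NDPF N`, defined by `π_i (i+1) = i` and `π_i j = j` for
`j ≠ i + 1` (for `1 ≤ i ≤ N - 1`). -/
def piGen (N i : ℕ) : NDPF N := ⟨piFun N i, piFun_monotone N i, piFun_regressive N i⟩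

/-- The element `C_D` of the monoid algebra `K[NDPF_N]` attached to a subset
`D ⊆ {1, …, N-1}`: the product of the `1 - π_i` over `i ∉ D` in increasing order, times the
product of the `π_i` over `i ∈ D` in decreasing order. -/
noncomputable def CD (K : Type*) [Field K] (N : ℕ) (D : Finset ℕ) :
    MonoidAlgebra K (NDPF N) :=
  ((((Finset.Icc 1 (N - 1)) \ D).sort (· ≤ ·)).map
      (fun i => (1 : MonoidAlgebra K (NDPF N))
        - MonoidAlgebra.of K (NDPF N) (piGen N i))).prod *
  (((D.sort (· ≤ ·)).reverse.map
      (fun i => MonoidAlgebra.of K (NDPF N) (piGen N i))).prod)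

open Finset

section OrderedProducts

variable {M : Type*} [Monoid M]

def ascProd (s : Finset ℕ) (f : ℕ → M) : M := ((s.sort (· ≤ ·)).map f).prod

def descProd (s : Finset ℕ) (f : ℕ → M) : M := ((s.sort (· ≤ ·)).reverse.map f).prod

@[simp] lemma ascProd_empty (f : ℕ → M) : ascProd ∅ f = 1 := by simp [ascProd]

@[simp] lemma descProd_empty (f : ℕ → M) : descProd ∅ f = 1 := by simp [descProd]

lemma ascProd_insert_of_lt {s : Finset ℕ} {a : ℕ} (h : ∀ x ∈ s, a < x) (f : ℕ → M) :
    ascProd (insert a s) f = f a * ascProd s f := by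
  rw [ascProd, sort_insert _ (fun x hx => (h x hx).le) fun ha => (h a ha).false]
  rfl

lemma descProd_insert_of_lt {s : Finset ℕ} {a : ℕ} (h : ∀ x ∈ s, a < x) (f : ℕ → M) :
    descProd (insert a s) f = descProd s f * f a := by
  rw [descProd, sort_insert _ (fun x hx => (h x hx).le) fun ha => (h a ha).false]
  simp [descProd]

lemma map_ascProd {M' F : Type*} [Monoid M'] [FunLike F M M'] [MonoidHomClass F M M'] (φ : F)
    (s : Finset ℕ) (f : ℕ → M) :
    φ (ascProd s f) = ascProd s (φ ∘ f) := by
  rw [ascProd, map_list_prod, List.map_map, ascProd]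

lemma map_descProd {M' F : Type*} [Monoid M'] [FunLike F M M'] [MonoidHomClass F M M'] (φ : F)
    (s : Finset ℕ) (f : ℕ → M) :
    φ (descProd s f) = descProd s (φ ∘ f) := by
  rw [descProd, map_list_prod, List.map_map, descProd]

lemma ascProd_eq_one {s : Finset ℕ} {f : ℕ → M} (h : ∀ i ∈ s, f i = 1) : ascProd s f = 1 :=
  List.prod_eq_one fun _ hx => by
    obtain ⟨i, hi, rfl⟩ := List.mem_map.mp hx
    exact h i ((mem_sort _).mp hi)

lemma descProd_eq_one {s : Finset ℕ} {f : ℕ → M} (h : ∀ i ∈ s, f i = 1) : descProd s f = 1 :=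
  List.prod_eq_one fun _ hx => by
    obtain ⟨i, hi, rfl⟩ := List.mem_map.mp hx
    exact h i ((mem_sort _).mp (List.mem_reverse.mp hi))

end OrderedProducts

lemma sum_powerset_neg_one_pow_card_smul_eq_zero {α G : Type*} [DecidableEq α] [AddCommGroup G]
    {s : Finset α} {a : α} (ha : a ∈ s) (φ : Finset α → G)
    (hφ : ∀ t ⊆ s.erase a, φ (insert a t) = φ t) :
    ∑ t ∈ s.powerset, (-1 : ℤ) ^ #t • φ t = 0 := by
  rw [← insert_erase ha, sum_powerset_insert (notMem_erase a s), ← sum_add_distrib]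
  refine sum_eq_zero fun t ht => ?_
  have hat : a ∉ t := fun h => notMem_erase a s (mem_powerset.mp ht h)
  rw [card_insert_of_notMem hat, hφ t (mem_powerset.mp ht), pow_succ, mul_neg_one, neg_smul,
    add_neg_cancel]

section Ring

variable {R : Type*} [Ring R]

lemma ascProd_one_sub (s : Finset ℕ) (f : ℕ → R) :
    ascProd s (fun i => 1 - f i) = ∑ t ∈ s.powerset, (-1 : ℤ) ^ #t • ascProd t f := by
  induction s using induction_on_min with
  | empty => simp
  | insert a s ha ih =>
    have has : a ∉ s := fun h => (ha a h).false
    rw [ascProd_insert_of_lt ha, ih, sum_powerset_insert has, sub_mul, one_mul, mul_sum,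
      sub_eq_add_neg, ← sum_neg_distrib]
    congr 1
    refine sum_congr rfl fun t ht => ?_
    have hat : a ∉ t := fun h => has (mem_powerset.mp ht h)
    rw [ascProd_insert_of_lt (fun x hx => ha x (mem_powerset.mp ht hx)), card_insert_of_notMem hat,
      pow_succ, mul_neg_one, neg_smul, mul_smul_comm]

lemma sum_powerset_ascProd_one_sub_mul_descProd (s : Finset ℕ) (f : ℕ → R) :
    ∑ t ∈ s.powerset, ascProd (s \ t) (fun i => 1 - f i) * descProd t f = 1 := by
  induction s using induction_on_min with
  | empty => simp
  | insert a s ha ih =>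
    have has : a ∉ s := fun h => (ha a h).false
    calc _ = ∑ t ∈ s.powerset, (1 - f a) * (ascProd (s \ t) (fun i => 1 - f i) * descProd t f)
          + ∑ t ∈ s.powerset, ascProd (s \ t) (fun i => 1 - f i) * descProd t f * f a := by
          rw [sum_powerset_insert has]
          congr 1 <;> refine sum_congr rfl fun t ht => ?_ <;> have ht' := mem_powerset.mp ht
          · rw [insert_sdiff_of_notMem _ fun h => has (ht' h),
              ascProd_insert_of_lt (fun x hx => ha x (sdiff_subset hx)), mul_assoc]
          · rw [insert_sdiff_insert, sdiff_insert_of_notMem has,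
              descProd_insert_of_lt (fun x hx => ha x (ht' hx)), mul_assoc]
      _ = 1 := by rw [← mul_sum, ← sum_mul, ih, mul_one, one_mul, sub_add_cancel]

end Ring

lemma isIdempotentElem_of_mul_eq_zero_of_sum_eq_one {R ι : Type*} [Semiring R] {s : Finset ι}
    {e : ι → R} (horth : ∀ i ∈ s, ∀ j ∈ s, i ≠ j → e i * e j = 0) (hsum : ∑ i ∈ s, e i = 1)
    {i : ι} (hi : i ∈ s) : IsIdempotentElem (e i) := by
  have := congrArg (e i * ·) hsum
  simp only [mul_sum, mul_one] at this
  rwa [sum_eq_single_of_mem i hi fun j hj hji => horth i hi j hj hji.symm] at this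

namespace NDPF

variable {N : ℕ} {R : Type*} [Ring R]

lemma val_mul_apply (f g : NDPF N) (x : IccN N) : (f * g).1 x = g.1 (f.1 x) := rfl

lemma val_one_apply (x : IccN N) : (1 : NDPF N).1 x = x := rfl

lemma coe_apply_le (f : NDPF N) (x : IccN N) : (f.1 x : ℕ) ≤ x := f.2.2 x

lemma one_le_coe (x : IccN N) : 1 ≤ (x : ℕ) := (mem_Icc.mp x.2).1

lemma coe_piGen_apply (i : ℕ) (x : IccN N) :
    ((piGen N i).1 x : ℕ) = if (x : ℕ) = i + 1 ∧ 1 ≤ i ∧ i ≤ N - 1 then i else x :=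
  piFun_coe N i x

lemma coe_ascProd_piGen_apply {V : Finset ℕ} (hV : V ⊆ Icc 1 (N - 1)) (x : IccN N) :
    ((ascProd V (piGen N)).1 x : ℕ) = if (x : ℕ) - 1 ∈ V then (x : ℕ) - 1 else (x : ℕ) := by
  induction V using induction_on_min generalizing x with
  | empty =>
    rw [ascProd_empty, val_one_apply, if_neg (notMem_empty _)]
  | insert a V ha ih =>
    have haI := mem_Icc.mp (hV (mem_insert_self a V))
    have hx := one_le_coe x
    rw [ascProd_insert_of_lt ha, val_mul_apply, ih ((subset_insert a V).trans hV), coe_piGen_apply]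
    by_cases hxa : (x : ℕ) = a + 1
    · have : a - 1 ∉ V := fun h => by have := ha _ h; omega
      simp [hxa, haI.1, haI.2, this]
    · have : (x : ℕ) - 1 ≠ a := by omega
      simp [hxa, this]

/-- With `descProd_piGen_apply_ne_succ`: `descProd D (piGen N)` sends `x` to the bottom of its
run in `D`. -/
lemma Ico_descProd_piGen_apply_subset (D : Finset ℕ) (x : IccN N) :
    Ico ((descProd D (piGen N)).1 x : ℕ) x ⊆ D := by
  induction D using induction_on_min generalizing x with
  | empty => rw [descProd_empty, val_one_apply, Ico_self]
  | insert a D ha ih =>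
    rw [descProd_insert_of_lt ha, val_mul_apply, coe_piGen_apply]
    have hD := ih x
    have hle := coe_apply_le (descProd D (piGen N)) x
    split_ifs with h
    · intro z hz
      rw [mem_Ico] at hz
      rcases eq_or_lt_of_le hz.1 with rfl | hz1
      · exact mem_insert_self _ _
      · exact mem_insert_of_mem (hD (mem_Ico.mpr ⟨by omega, hz.2⟩))
    · exact hD.trans (subset_insert a D)

lemma descProd_piGen_apply_ne_succ {D : Finset ℕ} (hD : D ⊆ Icc 1 (N - 1)) {i : ℕ} (hi : i ∈ D)
    (x : IccN N) : ((descProd D (piGen N)).1 x : ℕ) ≠ i + 1 := by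
  induction D using induction_on_min generalizing x with
  | empty => simp at hi
  | insert a D ha ih =>
    have haI := mem_Icc.mp (hD (mem_insert_self a D))
    rw [descProd_insert_of_lt ha, val_mul_apply, coe_piGen_apply]
    rcases mem_insert.mp hi with rfl | hiD
    · split_ifs <;> omega
    · have := ih ((subset_insert a D).trans hD) hiD x
      have := ha i hiD
      split_ifs <;> omega

lemma descProd_piGen_apply_eq_self (D : Finset ℕ) {x : IccN N} (hx : (x : ℕ) - 1 ∉ D) :
    (descProd D (piGen N)).1 x = x := by
  have hle := coe_apply_le (descProd D (piGen N)) x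
  have := one_le_coe ((descProd D (piGen N)).1 x)
  apply Subtype.ext
  by_contra hne
  exact hx (Ico_descProd_piGen_apply_subset D x (mem_Ico.mpr ⟨by omega, by omega⟩))

lemma descProd_piGen_apply_eq_of_Ico_subset {D : Finset ℕ} (hD : D ⊆ Icc 1 (N - 1))
    {x y : IccN N} (hxy : (x : ℕ) ≤ y) (h : Ico (x : ℕ) y ⊆ D) :
    (descProd D (piGen N)).1 x = (descProd D (piGen N)).1 y := by
  have hx := Ico_descProd_piGen_apply_subset D x
  have hy := Ico_descProd_piGen_apply_subset D y
  have hwx := coe_apply_le (descProd D (piGen N)) x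
  have hwy := coe_apply_le (descProd D (piGen N)) y
  have hnx := fun i (hi : i ∈ D) => descProd_piGen_apply_ne_succ hD hi x
  have hny := fun i (hi : i ∈ D) => descProd_piGen_apply_ne_succ hD hi y
  have h1x := one_le_coe ((descProd D (piGen N)).1 x)
  have h1y := one_le_coe ((descProd D (piGen N)).1 y)
  apply Subtype.ext
  generalize ((descProd D (piGen N)).1 x : ℕ) = a at *
  generalize ((descProd D (piGen N)).1 y : ℕ) = b at *
  by_contra hne
  rcases lt_or_gt_of_ne hne with hlt | hlt
  · have hmem : b - 1 ∈ D := by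
      by_cases hc : b - 1 < x
      · exact hx (mem_Ico.mpr ⟨by omega, hc⟩)
      · exact h (mem_Ico.mpr ⟨by omega, by omega⟩)
    exact hny _ hmem (by omega)
  · exact hnx (a - 1) (hy (mem_Ico.mpr ⟨by omega, by omega⟩)) (by omega)

lemma ascProd_of_piGen (s : Finset ℕ) :
    ascProd s (fun i => MonoidAlgebra.of R (NDPF N) (piGen N i))
      = MonoidAlgebra.of R (NDPF N) (ascProd s (piGen N)) :=
  (map_ascProd _ s _).symm

lemma descProd_of_piGen (s : Finset ℕ) :
    descProd s (fun i => MonoidAlgebra.of R (NDPF N) (piGen N i))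
      = MonoidAlgebra.of R (NDPF N) (descProd s (piGen N)) :=
  (map_descProd _ s _).symm

lemma piGen_mul_eq_self_of_apply_eq (g : NDPF N) {s : ℕ}
    (h : ∀ x y : IccN N, (x : ℕ) = s → (y : ℕ) = s + 1 → g.1 x = g.1 y) :
    piGen N s * g = g := by
  apply Subtype.ext
  funext x
  rw [val_mul_apply]
  by_cases hx : (x : ℕ) = s + 1 ∧ 1 ≤ s ∧ s ≤ N - 1
  · exact h _ _ (by rw [coe_piGen_apply, if_pos hx]) hx.1
  · rw [show (piGen N s).1 x = x from Subtype.ext (by rw [coe_piGen_apply, if_neg hx])]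

/-- Expanding the product, the terms indexed by `t` and `insert i t` cancel, since `ascProd t`
and `ascProd (insert i t)` only differ at `i + 1`, a value `g` never takes. -/
lemma of_mul_ascProd_one_sub_eq_zero {A : Finset ℕ} (hA : A ⊆ Icc 1 (N - 1)) {i : ℕ}
    (hi : i ∈ A) {g : NDPF N} (hg : ∀ x, (g.1 x : ℕ) ≠ i + 1) :
    MonoidAlgebra.of R (NDPF N) g
      * ascProd A (fun j => 1 - MonoidAlgebra.of R (NDPF N) (piGen N j)) = 0 := by
  rw [ascProd_one_sub, mul_sum]
  simp_rw [mul_smul_comm, ascProd_of_piGen, ← map_mul]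
  refine sum_powerset_neg_one_pow_card_smul_eq_zero hi _ fun t ht => ?_
  have htA : insert i t ⊆ A := insert_subset hi (ht.trans (erase_subset i A))
  congr 1
  apply Subtype.ext
  funext x
  apply Subtype.ext
  rw [val_mul_apply, val_mul_apply, coe_ascProd_piGen_apply (htA.trans hA),
    coe_ascProd_piGen_apply ((subset_insert i t).trans (htA.trans hA))]
  have := hg x
  have := one_le_coe (g.1 x)
  have : (g.1 x : ℕ) - 1 ≠ i := by omega
  simp only [mem_insert, this, false_or]

lemma ascProd_one_sub_mul_of_eq_zero {A : Finset ℕ} (hA : A ⊆ Icc 1 (N - 1)) {s : ℕ}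
    (hs : s ∈ A) {h : NDPF N} (hh : piGen N s * h = h) :
    ascProd A (fun j => 1 - MonoidAlgebra.of R (NDPF N) (piGen N j))
      * MonoidAlgebra.of R (NDPF N) h = 0 := by
  rw [ascProd_one_sub, sum_mul]
  simp_rw [smul_mul_assoc, ascProd_of_piGen, ← map_mul]
  refine sum_powerset_neg_one_pow_card_smul_eq_zero hs _ fun t ht => ?_
  have hst : s ∉ t := fun h => notMem_erase s A (ht h)
  have hstA : insert s t ⊆ Icc 1 (N - 1) :=
    (insert_subset hs (ht.trans (erase_subset s A))).trans hA
  have htA : t ⊆ Icc 1 (N - 1) := (subset_insert s t).trans hstA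
  have hsI := mem_Icc.mp (hstA (mem_insert_self s t))
  congr 1
  apply Subtype.ext
  funext x
  rw [val_mul_apply, val_mul_apply]
  by_cases hx : (x : ℕ) = s + 1
  · have e1 : (ascProd (insert s t) (piGen N)).1 x = (piGen N s).1 x := Subtype.ext (by
      rw [coe_ascProd_piGen_apply hstA, coe_piGen_apply]
      simp [hx, hsI.1, hsI.2])
    have e2 : (ascProd t (piGen N)).1 x = x := Subtype.ext (by
      rw [coe_ascProd_piGen_apply htA]
      simp [hx, hst])
    rw [e1, e2, ← val_mul_apply, hh]
  · have := one_le_coe x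
    have : (x : ℕ) - 1 ≠ s := by omega
    refine congrArg h.1 (Subtype.ext ?_)
    rw [coe_ascProd_piGen_apply hstA, coe_ascProd_piGen_apply htA]
    simp only [mem_insert, this, false_or]

/-- Let `a` be the bottom of the `D`-run through `c`. If `a - 1 ∈ V`, restart from `a - 1`;
otherwise `c` and `c + 1` are sent to the same point, the bottom of the `E`-run through `a`. -/
lemma exists_piGen_mul_eq_self {D E V : Finset ℕ} (hDE : D ⊆ E) (hE : E ⊆ Icc 1 (N - 1))
    (hV : V ⊆ Icc 1 (N - 1) \ E) {c : ℕ} (hc : c ∈ Icc 1 (N - 1) \ D) (hcEV : c ∈ E ∪ V) :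
    ∃ s ∈ Icc 1 (N - 1) \ D,
      piGen N s * (descProd D (piGen N) * ascProd V (piGen N) * descProd E (piGen N))
        = descProd D (piGen N) * ascProd V (piGen N) * descProd E (piGen N) := by
  have hVI : V ⊆ Icc 1 (N - 1) := hV.trans sdiff_subset
  induction c using Nat.strong_induction_on with
  | _ c ih =>
  obtain ⟨hcI, hcD⟩ := mem_sdiff.mp hc
  have hcI' := mem_Icc.mp hcI
  let cx : IccN N := ⟨c, mem_Icc.mpr ⟨hcI'.1, by omega⟩⟩
  let a := (descProd D (piGen N)).1 cx
  have haD : Ico (a : ℕ) c ⊆ D := Ico_descProd_piGen_apply_subset D cx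
  have hac : (a : ℕ) ≤ c := coe_apply_le _ cx
  by_cases hv : (a : ℕ) - 1 ∈ V
  · obtain ⟨hvI, hvE⟩ := mem_sdiff.mp (hV hv)
    have := mem_Icc.mp hvI
    exact ih _ (by omega) (mem_sdiff.mpr ⟨hvI, fun h => hvE (hDE h)⟩) (mem_union_right _ hv)
  refine ⟨c, hc, piGen_mul_eq_self_of_apply_eq _ fun x y hx hy => ?_⟩
  have hPa : (ascProd V (piGen N)).1 a = a :=
    Subtype.ext (by rw [coe_ascProd_piGen_apply hVI, if_neg hv])
  have hDy : (descProd D (piGen N)).1 y = y :=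
    descProd_piGen_apply_eq_self D (by rwa [hy, Nat.add_sub_cancel])
  have hPy := coe_ascProd_piGen_apply hVI y
  rw [hy, Nat.add_sub_cancel] at hPy
  rw [val_mul_apply, val_mul_apply, val_mul_apply, val_mul_apply,
    show x = cx from Subtype.ext hx, hDy, hPa]
  apply descProd_piGen_apply_eq_of_Ico_subset hE
  · rw [hPy]
    split_ifs <;> omega
  · intro z hz
    rw [mem_Ico, hPy] at hz
    rcases lt_or_ge z c with hzc | hzc
    · exact hDE (haD (mem_Ico.mpr ⟨hz.1, hzc⟩))
    · split_ifs at hz with hcV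
      · omega
      · obtain rfl : z = c := by omega
        exact (mem_union.mp hcEV).resolve_right hcV

def FixesOutside (D : Finset ℕ) (f : NDPF N) : Prop :=
  ∀ x : IccN N, (x : ℕ) - 1 ∉ D → f.1 x = x

lemma fixesOutside_mul_iff {D : Finset ℕ} {f g : NDPF N} :
    FixesOutside D (f * g) ↔ FixesOutside D f ∧ FixesOutside D g := by
  refine ⟨fun h => ?_, fun ⟨hf, hg⟩ x hx => by rw [val_mul_apply, hf x hx, hg x hx]⟩
  have hf : FixesOutside D f := fun x hx => by
    have := congrArg Subtype.val (h x hx)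
    rw [val_mul_apply] at this
    have := coe_apply_le g (f.1 x)
    have := coe_apply_le f x
    exact Subtype.ext (by omega)
  refine ⟨hf, fun x hx => ?_⟩
  have := h x hx
  rwa [val_mul_apply, hf x hx] at this

lemma fixesOutside_piGen {D : Finset ℕ} {i : ℕ} (hi : i ∈ D) : FixesOutside D (piGen N i) :=
  fun x hx => Subtype.ext (by
    rw [coe_piGen_apply, if_neg]
    rintro ⟨hx', -⟩
    exact hx (by rwa [hx', Nat.add_sub_cancel]))

lemma not_fixesOutside_piGen {D : Finset ℕ} {i : ℕ} (hi : i ∈ Icc 1 (N - 1)) (hiD : i ∉ D) :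
    ¬FixesOutside D (piGen N i) := by
  have hi' := mem_Icc.mp hi
  intro h
  have := congrArg Subtype.val (h ⟨i + 1, mem_Icc.mpr ⟨by omega, by omega⟩⟩ (by simpa using hiD))
  rw [coe_piGen_apply, if_pos ⟨rfl, hi'⟩] at this
  simp at this

open scoped Classical in
noncomputable def fixesOutsideChar (R : Type*) [MonoidWithZero R] (D : Finset ℕ) :
    NDPF N →* R where
  toFun f := if FixesOutside D f then 1 else 0
  map_one' := if_pos fun _ _ => rfl
  map_mul' f g := by
    simp only [fixesOutside_mul_iff]
    split_ifs <;> simp_all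

lemma fixesOutsideChar_apply_of_fixesOutside (R : Type*) [MonoidWithZero R] {D : Finset ℕ}
    {f : NDPF N} (h : FixesOutside D f) : fixesOutsideChar R D f = 1 :=
  if_pos h

lemma fixesOutsideChar_apply_of_not_fixesOutside (R : Type*) [MonoidWithZero R]
    {D : Finset ℕ} {f : NDPF N} (h : ¬FixesOutside D f) : fixesOutsideChar R D f = 0 :=
  if_neg h

variable (K : Type*) [Field K]

lemma CD_eq (D : Finset ℕ) :
    CD K N D = ascProd (Icc 1 (N - 1) \ D) (fun i => 1 - MonoidAlgebra.of K (NDPF N) (piGen N i))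
      * descProd D (fun i => MonoidAlgebra.of K (NDPF N) (piGen N i)) :=
  rfl

lemma CD_mul_CD_eq_zero_of_not_subset {D E : Finset ℕ} (hD : D ⊆ Icc 1 (N - 1))
    (h : ¬D ⊆ E) : CD K N D * CD K N E = 0 := by
  obtain ⟨i, hiD, hiE⟩ := not_subset.mp h
  rw [CD_eq, CD_eq, descProd_of_piGen, descProd_of_piGen, mul_assoc,
    ← mul_assoc (MonoidAlgebra.of _ _ _),
    of_mul_ascProd_one_sub_eq_zero sdiff_subset (mem_sdiff.mpr ⟨hD hiD, hiE⟩)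
      (descProd_piGen_apply_ne_succ hD hiD), zero_mul, mul_zero]

lemma CD_mul_CD_eq_zero_of_ssubset {D E : Finset ℕ} (hE : E ⊆ Icc 1 (N - 1)) (h : D ⊂ E) :
    CD K N D * CD K N E = 0 := by
  obtain ⟨i, hiE, hiD⟩ := exists_of_ssubset h
  rw [CD_eq, CD_eq, descProd_of_piGen, descProd_of_piGen, ascProd_one_sub (Icc 1 (N - 1) \ E),
    mul_assoc, ← mul_assoc (MonoidAlgebra.of _ _ _), mul_sum, sum_mul, mul_sum]
  refine sum_eq_zero fun V hV => ?_
  obtain ⟨s, hs, hsg⟩ := exists_piGen_mul_eq_self h.subset hE (mem_powerset.mp hV)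
    (mem_sdiff.mpr ⟨hE hiE, hiD⟩) (mem_union_left _ hiE)
  rw [mul_smul_comm, smul_mul_assoc, mul_smul_comm, ascProd_of_piGen, ← map_mul, ← map_mul,
    ascProd_one_sub_mul_of_eq_zero sdiff_subset hs hsg, smul_zero]

lemma CD_mul_CD_eq_zero {D E : Finset ℕ} (hD : D ⊆ Icc 1 (N - 1)) (hE : E ⊆ Icc 1 (N - 1))
    (h : D ≠ E) : CD K N D * CD K N E = 0 := by
  by_cases hDE : D ⊆ E
  · exact CD_mul_CD_eq_zero_of_ssubset K hE (ssubset_of_subset_of_ne hDE h)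
  · exact CD_mul_CD_eq_zero_of_not_subset K hD hDE

lemma CD_ne_zero (D : Finset ℕ) : CD K N D ≠ 0 := by
  let χ := MonoidAlgebra.lift K K (NDPF N) (fixesOutsideChar K D)
  have hχ (i : ℕ) : χ (MonoidAlgebra.of K (NDPF N) (piGen N i))
      = fixesOutsideChar K D (piGen N i) :=
    MonoidAlgebra.lift_of _ _
  have hCD : χ (CD K N D) = 1 := by
    rw [CD_eq, map_mul, map_ascProd, map_descProd, ascProd_eq_one, descProd_eq_one, one_mul]
    · intro i hi
      simp only [Function.comp_apply, hχ]
      exact fixesOutsideChar_apply_of_fixesOutside K (fixesOutside_piGen hi)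
    · intro i hi
      obtain ⟨hiI, hiD⟩ := mem_sdiff.mp hi
      simp only [Function.comp_apply, map_sub, map_one, hχ,
        fixesOutsideChar_apply_of_not_fixesOutside K (not_fixesOutside_piGen hiI hiD), sub_zero]
  intro h
  rw [h, map_zero] at hCD
  exact zero_ne_one hCD

end NDPF

theorem CD_complete_orthogonal_idempotents_general (K : Type*) [Field K] (N : ℕ) :
    (∀ D : Finset ℕ, D ⊆ Finset.Icc 1 (N - 1) →
      CD K N D ≠ 0 ∧ IsIdempotentElem (CD K N D)) ∧
    (∀ D D' : Finset ℕ, D ⊆ Finset.Icc 1 (N - 1) → D' ⊆ Finset.Icc 1 (N - 1) →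
      D ≠ D' → CD K N D * CD K N D' = 0) ∧
    (∑ D ∈ (Finset.Icc 1 (N - 1)).powerset, CD K N D) = 1 ∧
    ((Finset.Icc 1 (N - 1)).powerset.card = 2 ^ (N - 1)) := by
  have horth (D D' : Finset ℕ) (hD : D ⊆ Icc 1 (N - 1)) (hD' : D' ⊆ Icc 1 (N - 1))
      (hne : D ≠ D') : CD K N D * CD K N D' = 0 :=
    NDPF.CD_mul_CD_eq_zero K hD hD' hne
  have hsum : ∑ D ∈ (Icc 1 (N - 1)).powerset, CD K N D = 1 :=
    sum_powerset_ascProd_one_sub_mul_descProd _ _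
  refine ⟨fun D hD => ⟨NDPF.CD_ne_zero K D, ?_⟩, horth, hsum, by simp⟩
  exact isIdempotentElem_of_mul_eq_zero_of_sum_eq_one
    (fun D hD D' hD' => horth D D' (mem_powerset.mp hD) (mem_powerset.mp hD')) hsum
    (mem_powerset.mpr hD)

/-- The family `(C_D)`, for `D` ranging over the `2^{N-1}` subsets of `{1, …, N-1}`, is a
complete set of nonzero orthogonal idempotents of `K[NDPF_N]`. -/
theorem CD_complete_orthogonal_idempotents (K : Type*) [Field K] (N : ℕ) (hN : 1 ≤ N) :
    (∀ D : Finset ℕ, D ⊆ Finset.Icc 1 (N - 1) →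
      CD K N D ≠ 0 ∧ IsIdempotentElem (CD K N D)) ∧
    (∀ D D' : Finset ℕ, D ⊆ Finset.Icc 1 (N - 1) → D' ⊆ Finset.Icc 1 (N - 1) →
      D ≠ D' → CD K N D * CD K N D' = 0) ∧
    (∑ D ∈ (Finset.Icc 1 (N - 1)).powerset, CD K N D) = 1 ∧
    ((Finset.Icc 1 (N - 1)).powerset.card = 2 ^ (N - 1)) :=
  CD_complete_orthogonal_idempotents_general K N
end
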